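/- Suppose some pole λ_m is purely imaginary and nonzero (Re(λ_m) = 0, λ_m ≠ 0) and its residue matrix φ_m is nonzero. Then for every real ω > |λ_m|, the real-valued function ν ↦ tr( H(iν) · H(iν)^* ) (the squared Frobenius norm of H(iν), defined for all ν ∈ [−ω,ω] except the finitely many points where iν is a pole; here ^* denotes conjugate transpose) is not integrable on the interval [−ω, ω]. -/

import Mathlib

open Complex Matrix MeasureTheory BigOperators

/-- Transfer function `H(s) = Σᵢ (s − λᵢ)⁻¹ • φᵢ + D`. -/
noncomputable def transferH {n n_u n_y : ℕ} (lam : Fin n → ℂ)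
    (φ : Fin n → Matrix (Fin n_y) (Fin n_u) ℂ) (D : Matrix (Fin n_y) (Fin n_u) ℂ)
    (s : ℂ) : Matrix (Fin n_y) (Fin n_u) ℂ :=
  (∑ i, (s - lam i)⁻¹ • φ i) + D

/-!
Write `λ_m = i ν₀`. Since `λ_m` is a simple pole with residue `φ_m`, `(s − λ_m) H(s) → φ_m`,
and as `|iν − λ_m| = |ν − ν₀|` the integrand `‖H(iν)‖²_F` satisfies
`(ν − ν₀)² ‖H(iν)‖²_F → ‖φ_m‖²_F > 0`. So the integrand blows up like `(ν − ν₀)⁻²`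
at the interior point `ν₀` of `[−ω, ω]`, which is not integrable.
-/

open Filter Topology Asymptotics

theorem not_intervalIntegrable_of_tendsto_sub_sq_mul {f : ℝ → ℝ} {a b c L : ℝ}
    (h : Tendsto (fun x => (x - c) ^ 2 * f x) (𝓝[≠] c) (𝓝 L)) (hL : L ≠ 0) (hab : a ≠ b)
    (hc : c ∈ Set.uIcc a b) : ¬ IntervalIntegrable f volume a b := by
  refine not_intervalIntegrable_of_sub_inv_isBigO_punctured ?_ hab hc
  have hsub : Tendsto (fun x => x - c) (𝓝[≠] c) (𝓝 0) :=
    ((continuous_sub_right c).tendsto' c 0 (sub_self c)).mono_left nhdsWithin_le_nhds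
  have hbdd : (fun x => (x - c) * ((x - c) ^ 2 * f x)⁻¹) =O[𝓝[≠] c] (fun _ => (1 : ℝ)) :=
    (hsub.mul (h.inv₀ hL)).isBigO_one ℝ
  have heq : ∀ᶠ x in 𝓝[≠] c, (x - c) * ((x - c) ^ 2 * f x)⁻¹ * f x = (x - c)⁻¹ := by
    filter_upwards [self_mem_nhdsWithin, h.eventually_ne hL] with x hx hne
    have hfx : f x ≠ 0 := right_ne_zero_of_mul hne
    have hxc : x - c ≠ 0 := sub_ne_zero.2 hx
    field_simp
  simpa using (hbdd.mul (isBigO_refl f _)).congr' heq (by simp)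

namespace Matrix

variable {m n : Type*} [Fintype m] [Fintype n]

open scoped ComplexOrder in
theorem re_trace_mul_conjTranspose_self_pos {A : Matrix m n ℂ} (hA : A ≠ 0) :
    0 < (A * Aᴴ).trace.re := by
  have hpos : 0 < (A * Aᴴ).trace :=
    (posSemidef_self_mul_conjTranspose A).trace_nonneg.lt_of_ne
      (Ne.symm (trace_mul_conjTranspose_self_eq_zero_iff.not.mpr hA))
  exact (Complex.pos_iff.1 hpos).1

theorem re_trace_smul_mul_conjTranspose_smul (c : ℂ) (A : Matrix m n ℂ) :
    ((c • A) * (c • A)ᴴ).trace.re = Complex.normSq c * (A * Aᴴ).trace.re := by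
  rw [conjTranspose_smul, Matrix.smul_mul, Matrix.mul_smul, smul_smul, trace_smul, smul_eq_mul,
    Complex.star_def, Complex.mul_conj, Complex.re_ofReal_mul]

theorem continuous_re_trace_mul_conjTranspose_self :
    Continuous fun A : Matrix m n ℂ => (A * Aᴴ).trace.re :=
  Complex.continuous_re.comp
    (continuous_id.matrix_mul continuous_id.matrix_conjTranspose).matrix_trace

end Matrix

theorem tendsto_sub_smul_transferH {n n_u n_y : ℕ} {lam : Fin n → ℂ}
    (hlam : Function.Injective lam) (φ : Fin n → Matrix (Fin n_y) (Fin n_u) ℂ)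
    (D : Matrix (Fin n_y) (Fin n_u) ℂ) (m : Fin n) :
    Tendsto (fun s => (s - lam m) • transferH lam φ D s) (𝓝[≠] lam m) (𝓝 (φ m)) := by
  set g : ℂ → Matrix (Fin n_y) (Fin n_u) ℂ := fun s =>
    φ m + (∑ i ∈ Finset.univ.erase m, ((s - lam m) * (s - lam i)⁻¹) • φ i) + (s - lam m) • D
  have hg : ContinuousAt g (lam m) := by
    refine (continuousAt_const.add (tendsto_finsetSum _ fun i hi => ?_)).add (by fun_prop)
    have hi : lam m - lam i ≠ 0 := sub_ne_zero.2 (hlam.ne (Finset.ne_of_mem_erase hi).symm)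
    exact ((continuousAt_id.sub continuousAt_const).mul
      ((continuousAt_id.sub continuousAt_const).inv₀ hi)).smul continuousAt_const
  have hgm : g (lam m) = φ m := by simp [g]
  have heq : g =ᶠ[𝓝[≠] lam m] fun s => (s - lam m) • transferH lam φ D s := by
    filter_upwards [self_mem_nhdsWithin] with s hs
    have hs : s - lam m ≠ 0 := sub_ne_zero.2 hs
    simp only [g, transferH, smul_add, Finset.smul_sum, smul_smul,
      ← Finset.add_sum_erase _ _ (Finset.mem_univ m), mul_inv_cancel₀ hs, one_smul]
  exact (hgm ▸ hg.tendsto.mono_left nhdsWithin_le_nhds).congr' heq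

theorem tendsto_I_mul_nhdsNE (x₀ : ℝ) :
    Tendsto (fun x : ℝ => I * x) (𝓝[≠] x₀) (𝓝[≠] (I * x₀)) := by
  have hcont : Continuous fun x : ℝ => I * x := by fun_prop
  refine tendsto_nhdsWithin_iff.2 ⟨hcont.continuousAt.tendsto.mono_left nhdsWithin_le_nhds, ?_⟩
  filter_upwards [self_mem_nhdsWithin] with x hx
  simpa [Complex.I_ne_zero] using hx

theorem stmt_6_general (n n_u n_y : ℕ)
    (lam : Fin n → ℂ) (hdist : Function.Injective lam)
    (φ : Fin n → Matrix (Fin n_y) (Fin n_u) ℂ) (D : Matrix (Fin n_y) (Fin n_u) ℂ)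
    (m : Fin n) (hre : (lam m).re = 0) (hφ : φ m ≠ 0)
    (ω : ℝ) (hω : ‖lam m‖ < ω) :
    ¬ IntervalIntegrable
        (fun ν : ℝ =>
          ((transferH lam φ D (Complex.I * (ν : ℂ)) *
            (transferH lam φ D (Complex.I * (ν : ℂ)))ᴴ).trace).re)
        volume (-ω) ω := by
  set ν₀ := (lam m).im
  have hlam : I * ν₀ = lam m := by apply Complex.ext <;> simp [ν₀, hre]
  have hres := (tendsto_sub_smul_transferH hdist φ D m).comp (hlam ▸ tendsto_I_mul_nhdsNE ν₀)
  have hsq := (continuous_re_trace_mul_conjTranspose_self.tendsto (φ m)).comp hres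
  refine not_intervalIntegrable_of_tendsto_sub_sq_mul (c := ν₀) (hsq.congr fun x => ?_)
    (re_trace_mul_conjTranspose_self_pos hφ).ne' (by linarith [norm_nonneg (lam m)]) ?_
  · rw [Function.comp_apply, Function.comp_apply, re_trace_smul_mul_conjTranspose_smul, ← hlam,
      ← mul_sub, ← ofReal_sub, normSq_mul, normSq_I, normSq_ofReal, one_mul, sq]
  · have hν₀ : |ν₀| < ω := by
      rwa [← hlam, norm_mul, norm_I, one_mul, norm_real, Real.norm_eq_abs] at hω
    rw [Set.uIcc_of_le (by linarith [abs_nonneg ν₀])]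
    exact ⟨by linarith [neg_abs_le ν₀], by linarith [le_abs_self ν₀]⟩

theorem stmt_6 (n n_u n_y : ℕ) (hn : 0 < n) (hnu : 0 < n_u) (hny : 0 < n_y)
    (lam : Fin n → ℂ) (hdist : Function.Injective lam)
    (φ : Fin n → Matrix (Fin n_y) (Fin n_u) ℂ) (D : Matrix (Fin n_y) (Fin n_u) ℂ)
    (m : Fin n) (hre : (lam m).re = 0) (hne : lam m ≠ 0) (hφ : φ m ≠ 0)
    (ω : ℝ) (hω : ‖lam m‖ < ω) :
    ¬ IntervalIntegrable
        (fun ν : ℝ =>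
          ((transferH lam φ D (Complex.I * (ν : ℂ)) *
            (transferH lam φ D (Complex.I * (ν : ℂ)))ᴴ).trace).re)
        volume (-ω) ω :=
  stmt_6_general n n_u n_y lam hdist φ D m hre hφ ω hω
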